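/- arXiv:1005.0203 — 3 statements merged into one kernel-verified Lean document; each statement's English description precedes it below -/
import Mathlib

section
/- Let Ω have finite measure and suppose u is a measurable function such that |{|u| ≥ k}| ≤ C/k^s for all k > 0 (with s > 0), and ∫_Ω |∇T_k(u)|² ≤ C k^ρ for all k > 0 (with ρ > 0), where T_k denotes truncation at level k and the gradient is the weak gradient. Then |∇u| ∈ M^{2s/(ρ+s)}(Ω), i.e., there exists C' such that |{|∇u| ≥ λ}| ≤ C'/λ^{2s/(ρ+s)} for all λ > 0. -/
/-!
Split `{‖∇u‖ ≥ λ}` into the part where `|u| ≥ k`, controlled by the decay of the level sets of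
`u`, and the part where `|u| < k`, where `∇u = ∇T_k(u)` and Chebyshev's inequality gives the
bound `C k^ρ / λ²`. The two bounds `C / k^s` and `C k^ρ / λ²` balance at `k = λ^(2/(ρ+s))`,
where both equal `C / λ^(2s/(ρ+s))`.
-/

open MeasureTheory

theorem div_rpow_add_mul_rpow_div_sq_eq {s ρ lam : ℝ} (hρs : ρ + s ≠ 0) (hlam : 0 < lam)
    (C : ℝ) :
    C / (lam ^ (2 / (ρ + s))) ^ s + C * (lam ^ (2 / (ρ + s))) ^ ρ / lam ^ 2 =
      2 * C / lam ^ (2 * s / (ρ + s)) := by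
  have hs : (lam ^ (2 / (ρ + s))) ^ s = lam ^ (2 * s / (ρ + s)) := by
    rw [← Real.rpow_mul hlam.le]; ring_nf
  have hρ : (lam ^ (2 / (ρ + s))) ^ ρ / lam ^ 2 = (lam ^ (2 * s / (ρ + s)))⁻¹ := by
    rw [← Real.rpow_mul hlam.le, ← Real.rpow_natCast, ← Real.rpow_sub hlam,
      ← Real.rpow_neg hlam.le]
    congr 1
    field_simp
    ring
  rw [hs, mul_div_assoc C, hρ]
  ring

section

variable {α E : Type*} [MeasurableSpace α] [NormedAddCommGroup E] [MeasurableSpace E]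
  [OpensMeasurableSpace E] {μ : Measure α}

theorem meas_norm_ge_le_lintegral_sq_div {g : α → E} (hg : AEMeasurable g μ) {t : ℝ}
    (ht : 0 < t) :
    μ {x | t ≤ ‖g x‖} ≤ (∫⁻ x, ENNReal.ofReal (‖g x‖ ^ 2) ∂μ) / ENNReal.ofReal (t ^ 2) :=
  (measure_mono fun _ hx => ENNReal.ofReal_le_ofReal (pow_le_pow_left₀ ht.le hx 2)).trans
    (meas_ge_le_lintegral_div (hg.norm.pow_const 2).ennreal_ofReal
      (by simpa using ht.ne') ENNReal.ofReal_ne_top)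

theorem meas_norm_ge_le_add_lintegral_indicator {u : α → ℝ} {v : α → E} (hu : Measurable u)
    (hv : Measurable v) (Ω : Set α) (k : ℝ) {t : ℝ} (ht : 0 < t) :
    μ {x ∈ Ω | t ≤ ‖v x‖} ≤ μ {x ∈ Ω | k ≤ |u x|} +
      (∫⁻ x in Ω, ENNReal.ofReal (‖{x | |u x| < k}.indicator v x‖ ^ 2) ∂μ) /
        ENNReal.ofReal (t ^ 2) := by
  set A := {x ∈ Ω | k ≤ |u x|}
  set B := {x | t ≤ ‖{x | |u x| < k}.indicator v x‖}
  have hsplit : {x ∈ Ω | t ≤ ‖v x‖} ⊆ A ∪ B ∩ Ω := by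
    rintro x ⟨hxΩ, hxv⟩
    rcases le_or_gt k |u x| with hxu | hxu
    · exact Or.inl ⟨hxΩ, hxu⟩
    · refine Or.inr ⟨?_, hxΩ⟩
      simpa [B, Set.indicator_of_mem (show x ∈ {x | |u x| < k} from hxu)] using hxv
  calc μ {x ∈ Ω | t ≤ ‖v x‖} ≤ μ A + μ (B ∩ Ω) :=
        (measure_mono hsplit).trans (measure_union_le _ _)
    _ ≤ μ A + μ.restrict Ω B := add_le_add_right (Measure.le_restrict_apply _ _) _
    _ ≤ _ := by
        gcongr
        exact meas_norm_ge_le_lintegral_sq_div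
          (hv.indicator (measurableSet_lt hu.abs measurable_const)).aemeasurable ht

theorem meas_norm_ge_le_of_truncation_bounds {Ω : Set α} {u : α → ℝ} {v : α → E}
    (hu : Measurable u) (hv : Measurable v) {s ρ C : ℝ} (hρs : ρ + s ≠ 0) (hC : 0 ≤ C)
    (hM : ∀ k > (0 : ℝ), μ {x ∈ Ω | k ≤ |u x|} ≤ ENNReal.ofReal (C / k ^ s))
    (hG : ∀ k > (0 : ℝ),
      ∫⁻ x in Ω, ENNReal.ofReal (‖{x | |u x| < k}.indicator v x‖ ^ 2) ∂μ
        ≤ ENNReal.ofReal (C * k ^ ρ))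
    {lam : ℝ} (hlam : 0 < lam) :
    μ {x ∈ Ω | lam ≤ ‖v x‖} ≤ ENNReal.ofReal (2 * C / lam ^ (2 * s / (ρ + s))) := by
  set k := lam ^ (2 / (ρ + s))
  have hk : 0 < k := Real.rpow_pos_of_pos hlam _
  calc μ {x ∈ Ω | lam ≤ ‖v x‖}
      ≤ μ {x ∈ Ω | k ≤ |u x|} +
          (∫⁻ x in Ω, ENNReal.ofReal (‖{x | |u x| < k}.indicator v x‖ ^ 2) ∂μ) /
            ENNReal.ofReal (lam ^ 2) :=
        meas_norm_ge_le_add_lintegral_indicator hu hv Ω k hlam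
    _ ≤ ENNReal.ofReal (C / k ^ s) + ENNReal.ofReal (C * k ^ ρ) / ENNReal.ofReal (lam ^ 2) := by
        gcongr
        exacts [hM k hk, hG k hk]
    _ = ENNReal.ofReal (C / k ^ s + C * k ^ ρ / lam ^ 2) := by
        rw [ENNReal.ofReal_add (by positivity) (by positivity),
          ENNReal.ofReal_div_of_pos (x := C * k ^ ρ) (by positivity)]
    _ = _ := by rw [div_rpow_add_mul_rpow_div_sq_eq hρs hlam]

end

theorem stmt_10_general (N : ℕ) (Ω : Set (EuclideanSpace ℝ (Fin N)))
    (s ρ C : ℝ) (hs : 0 < s) (hρ : 0 < ρ) (hC : 0 < C)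
    (u : EuclideanSpace ℝ (Fin N) → ℝ) (hu : Measurable u)
    (v : EuclideanSpace ℝ (Fin N) → EuclideanSpace ℝ (Fin N)) (hv : Measurable v)
    (hM : ∀ k > (0 : ℝ), volume {x ∈ Ω | k ≤ |u x|} ≤ ENNReal.ofReal (C / k ^ s))
    (hG : ∀ k > (0 : ℝ),
      ∫⁻ x in Ω, ENNReal.ofReal (‖Set.indicator {x | |u x| < k} v x‖ ^ 2)
        ≤ ENNReal.ofReal (C * k ^ ρ)) :
    ∃ C' > (0 : ℝ), ∀ lam > (0 : ℝ),
      volume {x ∈ Ω | lam ≤ ‖v x‖} ≤ ENNReal.ofReal (C' / lam ^ (2 * s / (ρ + s))) :=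
  ⟨2 * C, by positivity, fun _ hlam =>
    meas_norm_ge_le_of_truncation_bounds hu hv (by positivity) hC.le hM hG hlam⟩

/-- Lemma 2.3 ([bdo]): if `|{|u| ≥ k}| ≤ C/k^s` for all `k > 0` and
`∫ |∇T_k(u)|² ≤ C k^ρ` for all `k > 0`, where the weak gradient `v` of `u` satisfies
`∇T_k(u) = v·χ_{|u|<k}`, then `|∇u| = ‖v‖ ∈ M^{2s/(ρ+s)}(Ω)`. -/
theorem stmt_10 (N : ℕ) (Ω : Set (EuclideanSpace ℝ (Fin N)))
    (hΩmeas : MeasurableSet Ω) (hΩ : volume Ω < ⊤)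
    (s ρ C : ℝ) (hs : 0 < s) (hρ : 0 < ρ) (hC : 0 < C)
    (u : EuclideanSpace ℝ (Fin N) → ℝ) (hu : Measurable u)
    (v : EuclideanSpace ℝ (Fin N) → EuclideanSpace ℝ (Fin N)) (hv : Measurable v)
    (hM : ∀ k > (0 : ℝ), volume {x ∈ Ω | k ≤ |u x|} ≤ ENNReal.ofReal (C / k ^ s))
    (hG : ∀ k > (0 : ℝ),
      ∫⁻ x in Ω, ENNReal.ofReal (‖Set.indicator {x | |u x| < k} v x‖ ^ 2)
        ≤ ENNReal.ofReal (C * k ^ ρ)) :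
    ∃ C' > (0 : ℝ), ∀ lam > (0 : ℝ),
      volume {x ∈ Ω | lam ≤ ‖v x‖} ≤ ENNReal.ofReal (C' / lam ^ (2 * s / (ρ + s))) :=
  stmt_10_general N Ω s ρ C hs hρ hC u hu v hv hM hG
end

section
/- Let h : [0, σ) → ℝ be continuous, increasing with h(0)=0 and h(s) → +∞ as s → σ⁻, let f ∈ L¹(Ω), f ≥ 0, and let (u_n) be measurable functions with values in [0, σ) satisfying ∫_{{s ≤ u_n < σ}} h(u_n) ≤ ∫_{{s ≤ u_n < σ}} f for every s ∈ (0, σ) and every n, and suppose sup_n |{s ≤ u_n < σ}| → 0 as s → σ⁻. Then the sequence (h(u_n)) is uniformly integrable: for every ε > 0 there is δ > 0 such that for all n and all measurable E with |E| < δ, ∫_E h(u_n) ≤ ε. -/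
open MeasureTheory Set Filter
open scoped ENNReal

/-!
Fix `s < σ` so close to `σ` that every superlevel set `{s ≤ u_n}` is small enough for the
absolute continuity of `∫ f` to make `∫_{s ≤ u_n} f ≤ ε/2`. For `E ⊆ Ω`, split `E` along
`{s ≤ u_n}`: on that part `h(u_n)` integrates to at most `∫_{s ≤ u_n} f`, and off it
`h(u_n) ≤ h(s)` by monotonicity, so `∫_E h(u_n) ≤ ε/2 + h(s)|E|`, which is at most `ε`
once `|E| < ε / (2 h(s))`.
-/

theorem setLIntegral_le_inter_add_mul_measure {α : Type*} [MeasurableSpace α] {μ : Measure α}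
    {g : α → ℝ≥0∞} {c : ℝ≥0∞} {E T : Set α} (hT : MeasurableSet T)
    (hg : ∀ x ∈ E \ T, g x ≤ c) :
    ∫⁻ x in E, g x ∂μ ≤ (∫⁻ x in E ∩ T, g x ∂μ) + c * μ E := by
  rw [← lintegral_inter_add_sdiff g E hT]
  gcongr
  calc ∫⁻ x in E \ T, g x ∂μ
      ≤ ∫⁻ _ in E \ T, c ∂μ := setLIntegral_mono measurable_const hg
    _ = c * μ (E \ T) := setLIntegral_const _ _
    _ ≤ c * μ E := by gcongr; exact sdiff_subset

theorem setLIntegral_comp_le_superlevel_add_mul_measure {α : Type*} [MeasurableSpace α]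
    {μ : Measure α} {Ω E : Set α} {u : α → ℝ} {h : ℝ → ℝ} {F : α → ℝ≥0∞} {I : Set ℝ} {s : ℝ}
    (hEΩ : E ⊆ Ω) (hu : Measurable u) (hh : MonotoneOn h I) (huI : ∀ x, u x ∈ I) (hs : s ∈ I)
    (hsuper : ∫⁻ x in {x ∈ Ω | s ≤ u x}, ENNReal.ofReal (h (u x)) ∂μ
      ≤ ∫⁻ x in {x ∈ Ω | s ≤ u x}, F x ∂μ) :
    ∫⁻ x in E, ENNReal.ofReal (h (u x)) ∂μ
      ≤ (∫⁻ x in {x ∈ Ω | s ≤ u x}, F x ∂μ) + ENNReal.ofReal (h s) * μ E := by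
  have h_low : ∀ x ∈ E \ {x | s ≤ u x}, ENNReal.ofReal (h (u x)) ≤ ENNReal.ofReal (h s) :=
    fun x hx ↦ ENNReal.ofReal_le_ofReal <| hh (huI x) hs (not_le.mp hx.2).le
  have hE_super : E ∩ {x | s ≤ u x} ⊆ {x ∈ Ω | s ≤ u x} := fun x hx ↦ ⟨hEΩ hx.1, hx.2⟩
  calc ∫⁻ x in E, ENNReal.ofReal (h (u x)) ∂μ
      ≤ (∫⁻ x in E ∩ {x | s ≤ u x}, ENNReal.ofReal (h (u x)) ∂μ)
          + ENNReal.ofReal (h s) * μ E :=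
        setLIntegral_le_inter_add_mul_measure (measurableSet_le measurable_const hu) h_low
    _ ≤ (∫⁻ x in {x ∈ Ω | s ≤ u x}, F x ∂μ) + ENNReal.ofReal (h s) * μ E := by
        gcongr ?_ + _
        exact (lintegral_mono_set hE_super).trans hsuper

theorem stmt_12_general (N : ℕ) (Ω : Set (EuclideanSpace ℝ (Fin N)))
    (σ : ℝ) (hσ : 0 < σ)
    (h : ℝ → ℝ)
    (hmono : StrictMonoOn h (Set.Ico 0 σ)) (h0 : h 0 = 0)
    (f : EuclideanSpace ℝ (Fin N) → ℝ) (hf1 : IntegrableOn f Ω)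
    (u : ℕ → EuclideanSpace ℝ (Fin N) → ℝ) (hu : ∀ n, Measurable (u n))
    (hurange : ∀ n, ∀ x, 0 ≤ u n x ∧ u n x < σ)
    (hyp : ∀ s ∈ Set.Ioo 0 σ, ∀ n : ℕ,
      ∫⁻ x in {x ∈ Ω | s ≤ u n x}, ENNReal.ofReal (h (u n x))
        ≤ ∫⁻ x in {x ∈ Ω | s ≤ u n x}, ENNReal.ofReal (f x))
    (hsmall : Tendsto (fun s : ℝ => ⨆ n : ℕ, volume {x ∈ Ω | s ≤ u n x})
      (nhdsWithin σ (Set.Iio σ)) (nhds 0)) :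
    ∀ ε > (0 : ℝ), ∃ δ > (0 : ℝ), ∀ n : ℕ, ∀ E ⊆ Ω, MeasurableSet E →
      volume E < ENNReal.ofReal δ →
      ∫⁻ x in E, ENNReal.ofReal (h (u n x)) ≤ ENNReal.ofReal ε := by
  intro ε hε
  obtain ⟨δ₁, hδ₁, hf_small⟩ := exists_pos_setLIntegral_lt_of_measure_lt
    hf1.lintegral_lt_top.ne (ε := ENNReal.ofReal (ε / 2)) (by simpa using hε)
  obtain ⟨s, hs_tail, hs0, hsσ⟩ := ((hsmall.eventually_lt_const hδ₁).and
    ((eventually_nhdsWithin_of_eventually_nhds (eventually_gt_nhds hσ)).and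
      self_mem_nhdsWithin)).exists
  have hhs : 0 < h s := h0 ▸ hmono ⟨le_rfl, hσ⟩ ⟨hs0.le, hsσ⟩ hs0
  refine ⟨ε / 2 / h s, by positivity, fun n E hEΩ _ hE => ?_⟩
  have h_tail :
      ∫⁻ x in {x ∈ Ω | s ≤ u n x}, ENNReal.ofReal (f x) ≤ ENNReal.ofReal (ε / 2) := by
    rw [← Measure.restrict_restrict_of_subset fun x hx ↦ hx.1]
    refine (hf_small _ ((Measure.restrict_apply_le _ _).trans_lt ?_)).le
    exact (le_iSup (fun n ↦ volume {x ∈ Ω | s ≤ u n x}) n).trans_lt hs_tail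
  calc ∫⁻ x in E, ENNReal.ofReal (h (u n x))
      ≤ (∫⁻ x in {x ∈ Ω | s ≤ u n x}, ENNReal.ofReal (f x))
          + ENNReal.ofReal (h s) * volume E :=
        setLIntegral_comp_le_superlevel_add_mul_measure hEΩ (hu n) hmono.monotoneOn
          (hurange n) ⟨hs0.le, hsσ⟩ (hyp s ⟨hs0, hsσ⟩ n)
    _ ≤ ENNReal.ofReal (ε / 2) + ENNReal.ofReal (h s) * ENNReal.ofReal (ε / 2 / h s) := by
        gcongr
    _ = ENNReal.ofReal ε := by
        rw [← ENNReal.ofReal_mul hhs.le, mul_div_cancel₀ _ hhs.ne',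
          ← ENNReal.ofReal_add (by positivity) (by positivity), add_halves]

/-- Equi-integrability of `h(u_n)` in the proof of Theorem 3: if
`∫_{s ≤ u_n < σ} h(u_n) ≤ ∫_{s ≤ u_n < σ} f` for every `s ∈ (0,σ)` and every `n`, and
`sup_n |{s ≤ u_n < σ}| → 0` as `s → σ⁻`, then `(h(u_n))` is uniformly integrable. -/
theorem stmt_12 (N : ℕ) (Ω : Set (EuclideanSpace ℝ (Fin N)))
    (hΩmeas : MeasurableSet Ω) (hΩ : volume Ω < ⊤)
    (σ : ℝ) (hσ : 0 < σ)
    (h : ℝ → ℝ) (hcont : ContinuousOn h (Set.Ico 0 σ))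
    (hmono : StrictMonoOn h (Set.Ico 0 σ)) (h0 : h 0 = 0)
    (hinf : Tendsto h (nhdsWithin σ (Set.Ico 0 σ)) atTop)
    (f : EuclideanSpace ℝ (Fin N) → ℝ) (hf : Measurable f) (hf1 : IntegrableOn f Ω)
    (hfpos : ∀ᵐ x ∂(volume.restrict Ω), 0 ≤ f x)
    (u : ℕ → EuclideanSpace ℝ (Fin N) → ℝ) (hu : ∀ n, Measurable (u n))
    (hurange : ∀ n, ∀ x, 0 ≤ u n x ∧ u n x < σ)
    (hyp : ∀ s ∈ Set.Ioo 0 σ, ∀ n : ℕ,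
      ∫⁻ x in {x ∈ Ω | s ≤ u n x}, ENNReal.ofReal (h (u n x))
        ≤ ∫⁻ x in {x ∈ Ω | s ≤ u n x}, ENNReal.ofReal (f x))
    (hsmall : Tendsto (fun s : ℝ => ⨆ n : ℕ, volume {x ∈ Ω | s ≤ u n x})
      (nhdsWithin σ (Set.Iio σ)) (nhds 0)) :
    ∀ ε > (0 : ℝ), ∃ δ > (0 : ℝ), ∀ n : ℕ, ∀ E ⊆ Ω, MeasurableSet E →
      volume E < ENNReal.ofReal δ →
      ∫⁻ x in E, ENNReal.ofReal (h (u n x)) ≤ ENNReal.ofReal ε :=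
  stmt_12_general N Ω σ hσ h hmono h0 f hf1 u hu hurange hyp hsmall
end

section
/- Let s > 0, ρ > 0 and C > 0. For a measurable function u with |{|u| ≥ k}| ≤ C/k^s and ∫_Ω |∇T_k(u)|² ≤ C k^ρ for all k > 0, and for every λ > 0, choosing k = λ^{2/(ρ+s)} yields |{|∇u| ≥ λ}| ≤ C/λ^{2s/(ρ+s)} + C λ^{2ρ/(ρ+s)}/λ² = 2C/λ^{2s/(ρ+s)}. -/
/-!
On `{|u| < k}` the truncated gradient `∇T_k(u) = v·χ_{|u|<k}` equals `v`, so
`{|v| ≥ λ} ⊆ {|u| ≥ k} ∪ {|∇T_k(u)| ≥ λ}`. The first set has measure at most `C/k^s`, the second,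
by Chebyshev's inequality, at most `C k^ρ/λ²`; with `k = λ^{2/(ρ+s)}` both bounds equal
`C/λ^{2s/(ρ+s)}`.
-/

open MeasureTheory Set Filter

theorem measure_setOf_le_norm_le_lintegral_sq_div {α E : Type*} [MeasurableSpace α]
    [NormedAddCommGroup E] [MeasurableSpace E] [OpensMeasurableSpace E]
    {μ : Measure α} {Ω : Set α} {f : α → E}
    (hf : AEMeasurable f (μ.restrict Ω)) {lam : ℝ} (hlam : 0 < lam) :
    μ {x ∈ Ω | lam ≤ ‖f x‖}
      ≤ (∫⁻ x in Ω, ENNReal.ofReal (‖f x‖ ^ 2) ∂μ) / ENNReal.ofReal (lam ^ 2) := by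
  have hf2 : AEMeasurable (fun x ↦ ENNReal.ofReal (‖f x‖ ^ 2)) (μ.restrict Ω) :=
    (hf.norm.pow_const 2).ennreal_ofReal
  calc μ {x ∈ Ω | lam ≤ ‖f x‖}
      ≤ μ.restrict Ω {x | ENNReal.ofReal (lam ^ 2) ≤ ENNReal.ofReal (‖f x‖ ^ 2)} := by
        refine (measure_mono ?_).trans (Measure.le_restrict_apply _ _)
        rintro x ⟨hxΩ, hx⟩
        exact ⟨ENNReal.ofReal_le_ofReal (pow_le_pow_left₀ hlam.le hx 2), hxΩ⟩
    _ ≤ _ := meas_ge_le_lintegral_div hf2 (by positivity) ENNReal.ofReal_ne_top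

theorem setOf_le_norm_subset_union_truncation {α E : Type*} [Zero E] [Norm E]
    (Ω : Set α) (u : α → ℝ) (v : α → E) (k lam : ℝ) :
    {x ∈ Ω | lam ≤ ‖v x‖}
      ⊆ {x ∈ Ω | k ≤ |u x|} ∪ {x ∈ Ω | lam ≤ ‖{x | |u x| < k}.indicator v x‖} := by
  rintro x ⟨hxΩ, hx⟩
  rcases le_or_gt k |u x| with hk | hk
  · exact Or.inl ⟨hxΩ, hk⟩
  · exact Or.inr ⟨hxΩ, by rwa [indicator_of_mem (show x ∈ {x | |u x| < k} from hk)]⟩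

theorem measure_setOf_le_norm_le_add_truncation {α E : Type*} [MeasurableSpace α]
    [NormedAddCommGroup E] [MeasurableSpace E] [OpensMeasurableSpace E]
    {μ : Measure α} {Ω : Set α} {u : α → ℝ} {v : α → E} (hu : Measurable u) (hv : Measurable v)
    (k : ℝ) {lam : ℝ} (hlam : 0 < lam) :
    μ {x ∈ Ω | lam ≤ ‖v x‖}
      ≤ μ {x ∈ Ω | k ≤ |u x|}
          + (∫⁻ x in Ω, ENNReal.ofReal (‖{x | |u x| < k}.indicator v x‖ ^ 2) ∂μ)
            / ENNReal.ofReal (lam ^ 2) := by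
  have htrunc : Measurable ({x | |u x| < k}.indicator v) :=
    hv.indicator (measurableSet_lt hu.abs measurable_const)
  calc μ {x ∈ Ω | lam ≤ ‖v x‖}
      ≤ μ {x ∈ Ω | k ≤ |u x|} + μ {x ∈ Ω | lam ≤ ‖{x | |u x| < k}.indicator v x‖} :=
        (measure_mono (setOf_le_norm_subset_union_truncation Ω u v k lam)).trans
          (measure_union_le _ _)
    _ ≤ _ := by
        gcongr
        exact measure_setOf_le_norm_le_lintegral_sq_div htrunc.aemeasurable hlam

theorem rpow_rpow_two_div_add (lam a b : ℝ) (hlam : 0 < lam) :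
    (lam ^ (2 / (a + b))) ^ a = lam ^ (2 * a / (a + b)) := by
  rw [← Real.rpow_mul hlam.le, div_mul_eq_mul_div]

theorem rpow_rpow_two_div_add_div_sq (lam ρ s : ℝ) (hlam : 0 < lam) (hρs : ρ + s ≠ 0) :
    (lam ^ (2 / (ρ + s))) ^ ρ / lam ^ (2 : ℝ) = 1 / lam ^ (2 * s / (ρ + s)) := by
  have hexp : 2 * ρ / (ρ + s) - 2 = -(2 * s / (ρ + s)) := by field_simp; ring
  rw [rpow_rpow_two_div_add lam ρ s hlam, ← Real.rpow_sub hlam, hexp, Real.rpow_neg hlam.le,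
    one_div]

theorem stmt_19_general (N : ℕ) (Ω : Set (EuclideanSpace ℝ (Fin N)))
    (s ρ C : ℝ) (hs : 0 < s) (hρ : 0 < ρ) (hC : 0 < C)
    (u : EuclideanSpace ℝ (Fin N) → ℝ) (hu : Measurable u)
    (v : EuclideanSpace ℝ (Fin N) → EuclideanSpace ℝ (Fin N)) (hv : Measurable v)
    (hM : ∀ k > (0 : ℝ), volume {x ∈ Ω | k ≤ |u x|} ≤ ENNReal.ofReal (C / k ^ s))
    (hG : ∀ k > (0 : ℝ),
      ∫⁻ x in Ω, ENNReal.ofReal (‖Set.indicator {x | |u x| < k} v x‖ ^ 2)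
        ≤ ENNReal.ofReal (C * k ^ ρ)) :
    ∀ lam > (0 : ℝ),
      volume {x ∈ Ω | lam ≤ ‖v x‖}
        ≤ ENNReal.ofReal (C / lam ^ (2 * s / (ρ + s)) +
            C * (lam ^ (2 / (ρ + s))) ^ ρ / lam ^ (2 : ℝ)) ∧
      ENNReal.ofReal (C / lam ^ (2 * s / (ρ + s)) +
            C * (lam ^ (2 / (ρ + s))) ^ ρ / lam ^ (2 : ℝ))
        = ENNReal.ofReal (2 * C / lam ^ (2 * s / (ρ + s))) := by
  intro lam hlam
  have hk0 : 0 < lam ^ (2 / (ρ + s)) := Real.rpow_pos_of_pos hlam _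
  have hsum : C / lam ^ (2 * s / (ρ + s)) + C * (lam ^ (2 / (ρ + s))) ^ ρ / lam ^ (2 : ℝ)
      = 2 * C / lam ^ (2 * s / (ρ + s)) := by
    rw [mul_div_assoc C, rpow_rpow_two_div_add_div_sq lam ρ s hlam (by linarith)]
    ring
  refine ⟨?_, by rw [hsum]⟩
  have hlevel := hM _ hk0
  rw [add_comm ρ s, rpow_rpow_two_div_add lam s ρ hlam, add_comm s ρ] at hlevel
  have hcheb :
      (∫⁻ x in Ω, ENNReal.ofReal (‖{x | |u x| < lam ^ (2 / (ρ + s))}.indicator v x‖ ^ 2))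
        / ENNReal.ofReal (lam ^ 2)
      ≤ ENNReal.ofReal (C * (lam ^ (2 / (ρ + s))) ^ ρ / lam ^ (2 : ℝ)) := by
    rw [Real.rpow_two, ENNReal.ofReal_div_of_pos (by positivity)]
    gcongr
    exact hG _ hk0
  calc volume {x ∈ Ω | lam ≤ ‖v x‖}
      ≤ _ := measure_setOf_le_norm_le_add_truncation hu hv _ hlam
    _ ≤ _ := add_le_add hlevel hcheb
    _ = _ := (ENNReal.ofReal_add (by positivity) (by positivity)).symm

/-- Quantitative core of Lemma 2.3: if `|{|u| ≥ k}| ≤ C/k^s` and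
`∫ |∇T_k(u)|² ≤ C k^ρ` for all `k > 0` (weak gradient `v`, `∇T_k(u) = v·χ_{|u|<k}`),
then for every `λ > 0`, the choice `k = λ^{2/(ρ+s)}` yields
`|{|∇u| ≥ λ}| ≤ 2C/λ^{2s/(ρ+s)}`. -/
theorem stmt_19 (N : ℕ) (Ω : Set (EuclideanSpace ℝ (Fin N)))
    (hΩmeas : MeasurableSet Ω) (hΩ : volume Ω < ⊤)
    (s ρ C : ℝ) (hs : 0 < s) (hρ : 0 < ρ) (hC : 0 < C)
    (u : EuclideanSpace ℝ (Fin N) → ℝ) (hu : Measurable u)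
    (v : EuclideanSpace ℝ (Fin N) → EuclideanSpace ℝ (Fin N)) (hv : Measurable v)
    (hM : ∀ k > (0 : ℝ), volume {x ∈ Ω | k ≤ |u x|} ≤ ENNReal.ofReal (C / k ^ s))
    (hG : ∀ k > (0 : ℝ),
      ∫⁻ x in Ω, ENNReal.ofReal (‖Set.indicator {x | |u x| < k} v x‖ ^ 2)
        ≤ ENNReal.ofReal (C * k ^ ρ)) :
    ∀ lam > (0 : ℝ),
      volume {x ∈ Ω | lam ≤ ‖v x‖}
        ≤ ENNReal.ofReal (C / lam ^ (2 * s / (ρ + s)) +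
            C * (lam ^ (2 / (ρ + s))) ^ ρ / lam ^ (2 : ℝ)) ∧
      ENNReal.ofReal (C / lam ^ (2 * s / (ρ + s)) +
            C * (lam ^ (2 / (ρ + s))) ^ ρ / lam ^ (2 : ℝ))
        = ENNReal.ofReal (2 * C / lam ^ (2 * s / (ρ + s))) :=
  stmt_19_general N Ω s ρ C hs hρ hC u hu v hv hM hG
end
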